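/- For every natural number n ≥ 1, ∑_{i=1}^{n} (H_i² − H_i^{(2)}) = (n+1)(H_n² − H_n^{(2)}) + 2n − 2n·H_n, where H_k is the k-th harmonic number and H_k^{(2)} is the k-th harmonic number of order 2. -/

import Mathlib

open Finset

noncomputable def H (n : ℕ) : ℝ := ∑ i ∈ Finset.Icc 1 n, (1:ℝ)/i
noncomputable def H2 (n : ℕ) : ℝ := ∑ i ∈ Finset.Icc 1 n, (1:ℝ)/(i:ℝ)^2

/-! The quantity `D k = H k ^ 2 - H2 k` satisfies `D (k + 1) = D k + 2 H k / (k + 1)`, since the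
square of the new term cancels against the new term of `H2`. With `(k + 1) H (k + 1) = (k + 1) H k + 1`
the identity follows by induction on `n`. -/

lemma H_succ (n : ℕ) : H (n + 1) = H n + 1 / ((n : ℝ) + 1) := by
  rw [H, sum_Icc_succ_top (by omega), ← H]
  push_cast
  rfl

lemma H2_succ (n : ℕ) : H2 (n + 1) = H2 n + 1 / ((n : ℝ) + 1) ^ 2 := by
  rw [H2, sum_Icc_succ_top (by omega), ← H2]
  push_cast
  rfl

lemma sq_H_sub_H2_succ (n : ℕ) :
    H (n + 1) ^ 2 - H2 (n + 1) = H n ^ 2 - H2 n + 2 * H n / ((n : ℝ) + 1) := by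
  rw [H_succ, H2_succ, ← one_div_pow]
  ring

theorem stmt10_general (n : ℕ) :
    ∑ i ∈ Icc 1 n, ((H i)^2 - H2 i)
      = ((n:ℝ)+1)*((H n)^2 - H2 n) + 2*(n:ℝ) - 2*(n:ℝ)*H n := by
  induction n with
  | zero => simp [H, H2]
  | succ n ih =>
    rw [sum_Icc_succ_top (by omega), ih, sq_H_sub_H2_succ, H_succ]
    have hn : (n : ℝ) + 1 ≠ 0 := by positivity
    push_cast
    field_simp
    ring

theorem stmt10 (n : ℕ) (hn : 1 ≤ n) :
    ∑ i ∈ Icc 1 n, ((H i)^2 - H2 i)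
      = ((n:ℝ)+1)*((H n)^2 - H2 n) + 2*(n:ℝ) - 2*(n:ℝ)*H n :=
  stmt10_general n
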